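/- Let D be a triangulated category with a recollement by Y and X. If (X^{≤0}, X^{≥0}) and (Y^{≤0}, Y^{≥0}) are t-structures in X and Y respectively, then the glued pair D^{≤0} = {Z ∈ D : j^*Z ∈ X^{≤0}, i^*Z ∈ Y^{≤0}} and D^{≥0} = {Z ∈ D : j^*Z ∈ X^{≥0}, i^!Z ∈ Y^{≥0}} is a t-structure in D. -/

import Mathlib

open CategoryTheory Limits Pretriangulated

namespace Glueing

variable (D : Type*) [Category D] [HasZeroObject D] [Preadditive D] [HasShift D ℤ]
  [∀ n : ℤ, (shiftFunctor D n).Additive] [Pretriangulated D]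

/-- A torsion pair in a triangulated category: a pair of strict (iso-closed) full
subcategories, closed under direct summands, with no morphisms from the first to the
second, such that every object is an extension of an object of the second class by an
object of the first class. -/
structure IsTorsionPair (P Q : D → Prop) : Prop where
  isoClosed_left : ∀ {A B : D}, (A ≅ B) → P A → P B
  isoClosed_right : ∀ {A B : D}, (A ≅ B) → Q A → Q B
  summands_left : ∀ {A B : D} (i : A ⟶ B) (r : B ⟶ A), i ≫ r = 𝟙 A → P B → P A
  summands_right : ∀ {A B : D} (i : A ⟶ B) (r : B ⟶ A), i ≫ r = 𝟙 A → Q B → Q A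
  orthogonal : ∀ {A B : D}, P A → Q B → ∀ f : A ⟶ B, f = 0
  exists_triangle : ∀ Z : D, ∃ (A B : D) (f : A ⟶ Z) (g : Z ⟶ B) (h : B ⟶ A⟦(1 : ℤ)⟧),
    P A ∧ Q B ∧ Triangle.mk f g h ∈ distinguishedTriangles

/-- A t-structure `(D^{≤0}, D^{≥0})` on a triangulated category, encoded as the
requirement that `(D^{≤0}, D^{≥1})` is a torsion pair with `D^{≤0}[1] ⊆ D^{≤0}`.
Here `Le` is `D^{≤0}` and `Ge` is `D^{≥0}`; the class `D^{≥1} = D^{≥0}[-1]` consists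
of objects `B` with `Ge (B⟦1⟧)`. -/
structure IsTStructure (Le Ge : D → Prop) : Prop where
  isoClosed_le : ∀ {A B : D}, (A ≅ B) → Le A → Le B
  isoClosed_ge : ∀ {A B : D}, (A ≅ B) → Ge A → Ge B
  summands_le : ∀ {A B : D} (i : A ⟶ B) (r : B ⟶ A), i ≫ r = 𝟙 A → Le B → Le A
  summands_ge : ∀ {A B : D} (i : A ⟶ B) (r : B ⟶ A), i ≫ r = 𝟙 A → Ge B → Ge A
  shift_le : ∀ A : D, Le A → Le (A⟦(1 : ℤ)⟧)
  shift_ge : ∀ A : D, Ge A → Ge (A⟦(-1 : ℤ)⟧)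
  orthogonal : ∀ {A B : D}, Le A → Ge (B⟦(1 : ℤ)⟧) → ∀ f : A ⟶ B, f = 0
  exists_triangle : ∀ Z : D, ∃ (A B : D) (f : A ⟶ Z) (g : Z ⟶ B) (h : B ⟶ A⟦(1 : ℤ)⟧),
    Le A ∧ Ge (B⟦(1 : ℤ)⟧) ∧ Triangle.mk f g h ∈ distinguishedTriangles

/-- A co-t-structure `(D_{≥0}, D_{≤0})` on a triangulated category; `Ge` is `D_{≥0}`
and `Le` is `D_{≤0}`. The class `D_{≤-1} = D_{≤0}[1]` consists of objects `B` with
`Le (B⟦-1⟧)`. -/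
structure IsCoTStructure (Ge Le : D → Prop) : Prop where
  isoClosed_ge : ∀ {A B : D}, (A ≅ B) → Ge A → Ge B
  isoClosed_le : ∀ {A B : D}, (A ≅ B) → Le A → Le B
  summands_ge : ∀ {A B : D} (i : A ⟶ B) (r : B ⟶ A), i ≫ r = 𝟙 A → Ge B → Ge A
  summands_le : ∀ {A B : D} (i : A ⟶ B) (r : B ⟶ A), i ≫ r = 𝟙 A → Le B → Le A
  shift_ge : ∀ A : D, Ge A → Ge (A⟦(-1 : ℤ)⟧)
  shift_le : ∀ A : D, Le A → Le (A⟦(1 : ℤ)⟧)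
  orthogonal : ∀ {A B : D}, Ge A → Le (B⟦(-1 : ℤ)⟧) → ∀ f : A ⟶ B, f = 0
  exists_triangle : ∀ Z : D, ∃ (A B : D) (f : A ⟶ Z) (g : Z ⟶ B) (h : B ⟶ A⟦(1 : ℤ)⟧),
    Ge A ∧ Le (B⟦(-1 : ℤ)⟧) ∧ Triangle.mk f g h ∈ distinguishedTriangles

variable (Y X : Type*) [Category Y] [HasZeroObject Y] [Preadditive Y] [HasShift Y ℤ]
  [∀ n : ℤ, (shiftFunctor Y n).Additive] [Pretriangulated Y]
  [Category X] [HasZeroObject X] [Preadditive X] [HasShift X ℤ]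
  [∀ n : ℤ, (shiftFunctor X n).Additive] [Pretriangulated X]

/-- A recollement of a triangulated category `D` by triangulated categories `Y` and `X`:
six triangle functors `i^* ⊣ i_* ⊣ i^!` and `j_! ⊣ j^* ⊣ j_*` with `i_*, j_!, j_*`
fully faithful, `j^* ∘ i_* = 0`, and the two canonical glueing triangles. -/
structure Recollement where
  iStar : D ⥤ Y
  iLower : Y ⥤ D
  iShriek : D ⥤ Y
  jLower : X ⥤ D
  jStar : D ⥤ X
  jUpper : X ⥤ D
  commShift_iStar : iStar.CommShift ℤ
  commShift_iLower : iLower.CommShift ℤ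
  commShift_iShriek : iShriek.CommShift ℤ
  commShift_jLower : jLower.CommShift ℤ
  commShift_jStar : jStar.CommShift ℤ
  commShift_jUpper : jUpper.CommShift ℤ
  isTriangulated_iStar : letI := commShift_iStar; iStar.IsTriangulated
  isTriangulated_iLower : letI := commShift_iLower; iLower.IsTriangulated
  isTriangulated_iShriek : letI := commShift_iShriek; iShriek.IsTriangulated
  isTriangulated_jLower : letI := commShift_jLower; jLower.IsTriangulated
  isTriangulated_jStar : letI := commShift_jStar; jStar.IsTriangulated
  isTriangulated_jUpper : letI := commShift_jUpper; jUpper.IsTriangulated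
  adj_i₁ : iStar ⊣ iLower
  adj_i₂ : iLower ⊣ iShriek
  adj_j₁ : jLower ⊣ jStar
  adj_j₂ : jStar ⊣ jUpper
  iLower_full : iLower.Full
  iLower_faithful : iLower.Faithful
  jLower_full : jLower.Full
  jLower_faithful : jLower.Faithful
  jUpper_full : jUpper.Full
  jUpper_faithful : jUpper.Faithful
  jStar_iLower_zero : ∀ A : Y, IsZero (jStar.obj (iLower.obj A))
  triangle₁ : ∀ Z : D, ∃ δ : jUpper.obj (jStar.obj Z) ⟶ (iLower.obj (iShriek.obj Z))⟦(1 : ℤ)⟧,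
    Triangle.mk (adj_i₂.counit.app Z) (adj_j₂.unit.app Z) δ ∈ distinguishedTriangles
  triangle₂ : ∀ Z : D, ∃ δ : iLower.obj (iStar.obj Z) ⟶ (jLower.obj (jStar.obj Z))⟦(1 : ℤ)⟧,
    Triangle.mk (adj_j₁.counit.app Z) (adj_i₁.unit.app Z) δ ∈ distinguishedTriangles

/-- An object `M` generates a triangulated category if the only class of objects which
is closed under isomorphisms, shifts, extensions and direct summands and contains `M`
is the class of all objects. -/
def Generates (C : Type*) [Category C] [HasZeroObject C] [Preadditive C] [HasShift C ℤ]
    [∀ n : ℤ, (shiftFunctor C n).Additive] [Pretriangulated C] (M : C) : Prop :=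
  ∀ P : C → Prop,
    (∀ {A B : C}, (A ≅ B) → P A → P B) →
    (∀ (n : ℤ) (A : C), P A → P (A⟦n⟧)) →
    (∀ T : Triangle C, T ∈ distinguishedTriangles → P T.obj₁ → P T.obj₃ → P T.obj₂) →
    (∀ {A B : C} (i : A ⟶ B) (r : B ⟶ A), i ≫ r = 𝟙 A → P B → P A) →
    P M → ∀ Z : C, P Z

/-- A silting object: no positive self-extensions, and it generates the category. -/
def IsSilting (C : Type*) [Category C] [HasZeroObject C] [Preadditive C] [HasShift C ℤ]
    [∀ n : ℤ, (shiftFunctor C n).Additive] [Pretriangulated C] (M : C) : Prop :=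
  (∀ i : ℤ, 0 < i → ∀ f : M ⟶ M⟦i⟧, f = 0) ∧ Generates C M

end Glueing

/-!
Orthogonality: for `A` in the glued aisle, the glueing triangle `j_! j^* A → A → i_* i^* A`
reduces a morphism `A → B` to a morphism `j^* A → j^* B` and one `i^* A → i^! B`, both zero
when `B` lies in the glued `D^{≥1}`.

Truncation of `Z`: first take the fibre `Z'` of `Z → j_* τ^{≥1} j^* Z`, so that
`j^* Z' ≅ τ^{≤0} j^* Z`; then the fibre `A` of `Z' → i_* τ^{≥1} i^* Z'`, so that
`i^* A ≅ τ^{≤0} i^* Z'`. Since `j^* i_* = 0` and `i^! j_* = 0`, the second step does not change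
`j^*` and the first does not change `i^!`, so the cone `B` of `A → Z` has `j^* B ≅ τ^{≥1} j^* Z`
and `i^! B ≅ τ^{≥1} i^* Z'`.
-/

namespace CategoryTheory

variable {C C' : Type*} [Category C] [HasZeroObject C] [Preadditive C] [HasShift C ℤ]
  [∀ n : ℤ, (shiftFunctor C n).Additive] [Pretriangulated C]
  [Category C'] [HasZeroObject C'] [Preadditive C'] [HasShift C' ℤ]
  [∀ n : ℤ, (shiftFunctor C' n).Additive] [Pretriangulated C']

noncomputable def Pretriangulated.isoObj₁OfIso₂₃ (T₁ T₂ : Triangle C)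
    (hT₁ : T₁ ∈ distTriang C) (hT₂ : T₂ ∈ distTriang C) (e₂ : T₁.obj₂ ≅ T₂.obj₂)
    (e₃ : T₁.obj₃ ≅ T₂.obj₃) (comm : T₁.mor₂ ≫ e₃.hom = e₂.hom ≫ T₂.mor₂) :
    T₁.obj₁ ≅ T₂.obj₁ :=
  (shiftFunctor C (1 : ℤ)).preimageIso (Triangle.π₃.mapIso
    (isoTriangleOfIso₁₂ _ _ (rot_of_distTriang _ hT₁) (rot_of_distTriang _ hT₂) e₂ e₃ comm))

lemma Functor.isIso_map_mor₁_of_isZero (F : C ⥤ C') [F.CommShift ℤ] [F.IsTriangulated]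
    (T : Triangle C) (hT : T ∈ distTriang C) (h : IsZero (F.obj T.obj₃)) :
    IsIso (F.map T.mor₁) :=
  (Triangle.isZero₃_iff_isIso₁ _ (F.map_distinguished _ hT)).1 h

noncomputable def Functor.isoObj₃OfIso₁₂ (F : C ⥤ C') [F.CommShift ℤ] [F.IsTriangulated]
    {A A' Z Z' B B' : C} {f : A ⟶ Z} {g : Z ⟶ B} {h : B ⟶ A⟦(1 : ℤ)⟧} {f' : A' ⟶ Z'}
    {g' : Z' ⟶ B'} {h' : B' ⟶ A'⟦(1 : ℤ)⟧} (hT : Triangle.mk f g h ∈ distTriang C)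
    (hT' : Triangle.mk f' g' h' ∈ distTriang C) (e₁ : F.obj A ≅ F.obj A')
    (e₂ : F.obj Z ≅ F.obj Z') (comm : F.map f ≫ e₂.hom = e₁.hom ≫ F.map f') :
    F.obj B ≅ F.obj B' :=
  Triangle.π₃.mapIso
    (isoTriangleOfIso₁₂ _ _ (F.map_distinguished _ hT) (F.map_distinguished _ hT') e₁ e₂ comm)

noncomputable def Adjunction.isoObj₁OfHomEquiv {F : C ⥤ C'} {G : C' ⥤ C} (adj : F ⊣ G)
    [G.Full] [G.Faithful] [F.CommShift ℤ] [F.IsTriangulated] {Z W : C} {X₁ X₂ : C'}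
    {a : X₁ ⟶ F.obj Z} {b : F.obj Z ⟶ X₂} {c : X₂ ⟶ X₁⟦(1 : ℤ)⟧}
    (hT : Triangle.mk a b c ∈ distTriang C') {p : W ⟶ Z} {δ : G.obj X₂ ⟶ W⟦(1 : ℤ)⟧}
    (hW : Triangle.mk p (adj.homEquiv _ _ b) δ ∈ distTriang C) : F.obj W ≅ X₁ :=
  isoObj₁OfIso₂₃ (F.mapTriangle.obj _) (Triangle.mk a b c) (F.map_distinguished _ hW) hT
    (Iso.refl _) ((asIso adj.counit).app X₂) (by
      change F.map (adj.homEquiv _ _ b) ≫ adj.counit.app X₂ = 𝟙 _ ≫ b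
      simp [Adjunction.homEquiv_unit])

end CategoryTheory

namespace Glueing.Recollement

variable {D Y X : Type*} [Category D] [HasZeroObject D] [Preadditive D] [HasShift D ℤ]
  [∀ n : ℤ, (shiftFunctor D n).Additive] [Pretriangulated D]
  [Category Y] [HasZeroObject Y] [Preadditive Y] [HasShift Y ℤ]
  [∀ n : ℤ, (shiftFunctor Y n).Additive] [Pretriangulated Y]
  [Category X] [HasZeroObject X] [Preadditive X] [HasShift X ℤ]
  [∀ n : ℤ, (shiftFunctor X n).Additive] [Pretriangulated X]

attribute [instance] commShift_iStar commShift_iLower commShift_iShriek commShift_jLower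
  commShift_jStar iLower_full iLower_faithful jUpper_full jUpper_faithful

variable (R : Recollement D Y X)

instance : R.iStar.IsTriangulated := R.isTriangulated_iStar
instance : R.iLower.IsTriangulated := R.isTriangulated_iLower
instance : R.iShriek.IsTriangulated := R.isTriangulated_iShriek
instance : R.jLower.IsTriangulated := R.isTriangulated_jLower
instance : R.jStar.IsTriangulated := R.isTriangulated_jStar

lemma isZero_iShriek_jUpper (A : X) : IsZero (R.iShriek.obj (R.jUpper.obj A)) := by
  obtain ⟨δ, hT⟩ := R.triangle₁ (R.jUpper.obj A)
  exact IsZero.of_full_of_faithful_of_isZero R.iLower _ (Triangle.isZero₁_of_isIso₂ _ hT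
    (inferInstanceAs (IsIso (R.adj_j₂.unit.app (R.jUpper.obj A)))))

lemma eq_zero_of_jStar_map_eq_zero {A B : D} (f : A ⟶ B) (hj : R.jStar.map f = 0)
    (hi : ∀ g : R.iStar.obj A ⟶ R.iShriek.obj B, g = 0) : f = 0 := by
  obtain ⟨δ, hT⟩ := R.triangle₂ A
  have hε : R.adj_j₁.counit.app A ≫ f = 0 := by
    simpa [hj] using (R.adj_j₁.counit.naturality f).symm
  obtain ⟨g, rfl⟩ := Triangle.yoneda_exact₂ _ hT f hε
  have hg : g = 0 := (R.adj_i₂.homEquiv _ _).injective <| by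
    rw [hi (R.adj_i₂.homEquiv _ _ g)]
    exact (R.adj_i₂.homAddEquiv_zero _ _).symm
  rw [hg]
  exact comp_zero

variable {R} {XLe XGe : X → Prop} {YLe YGe : Y → Prop}

lemma glued_orthogonal (hX : IsTStructure X XLe XGe) (hY : IsTStructure Y YLe YGe) {A B : D}
    (hA : XLe (R.jStar.obj A) ∧ YLe (R.iStar.obj A))
    (hB : XGe (R.jStar.obj (B⟦(1 : ℤ)⟧)) ∧ YGe (R.iShriek.obj (B⟦(1 : ℤ)⟧))) (f : A ⟶ B) :
    f = 0 :=
  R.eq_zero_of_jStar_map_eq_zero f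
    (hX.orthogonal hA.1 (hX.isoClosed_ge ((R.jStar.commShiftIso (1 : ℤ)).app B) hB.1) _)
    (hY.orthogonal hA.2 (hY.isoClosed_ge ((R.iShriek.commShiftIso (1 : ℤ)).app B) hB.2))

lemma glued_exists_triangle (hX : IsTStructure X XLe XGe) (hY : IsTStructure Y YLe YGe)
    (Z : D) : ∃ (A B : D) (f : A ⟶ Z) (g : Z ⟶ B) (h : B ⟶ A⟦(1 : ℤ)⟧),
      (XLe (R.jStar.obj A) ∧ YLe (R.iStar.obj A)) ∧
      (XGe (R.jStar.obj (B⟦(1 : ℤ)⟧)) ∧ YGe (R.iShriek.obj (B⟦(1 : ℤ)⟧))) ∧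
      Triangle.mk f g h ∈ distTriang D := by
  obtain ⟨X₁, X₂, a, b, c, hX₁, hX₂, hTX⟩ := hX.exists_triangle (R.jStar.obj Z)
  obtain ⟨Z', p, δ₁, hT₁⟩ := distinguished_cocone_triangle₁ (R.adj_j₂.homEquiv _ _ b)
  obtain ⟨Y₁, Y₂, a', b', c', hY₁, hY₂, hTY⟩ := hY.exists_triangle (R.iStar.obj Z')
  obtain ⟨A, q, δ₂, hT₂⟩ := distinguished_cocone_triangle₁ (R.adj_i₁.homEquiv _ _ b')
  obtain ⟨B, u, δ₃, hT₃⟩ := distinguished_cocone_triangle (q ≫ p)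
  have : IsIso (R.jStar.map q) :=
    R.jStar.isIso_map_mor₁_of_isZero _ hT₂ (R.jStar_iLower_zero Y₂)
  have : IsIso (R.iShriek.map p) :=
    R.iShriek.isIso_map_mor₁_of_isZero _ hT₁ (R.isZero_iShriek_jUpper X₂)
  let eXA : R.jStar.obj A ≅ X₁ :=
    asIso (R.jStar.map q) ≪≫ R.adj_j₂.isoObj₁OfHomEquiv hTX hT₁
  let eYA : R.iStar.obj A ≅ Y₁ := R.adj_i₁.isoObj₁OfHomEquiv hTY hT₂
  let eXB : R.jStar.obj B ≅ X₂ :=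
    R.jStar.isoObj₃OfIso₁₂ hT₃ hT₁ (asIso (R.jStar.map q)) (Iso.refl _) (by simp) ≪≫
      (asIso R.adj_j₂.counit).app X₂
  let eYB : Y₂ ≅ R.iShriek.obj B :=
    (asIso R.adj_i₂.unit).app Y₂ ≪≫
      R.iShriek.isoObj₃OfIso₁₂ hT₂ hT₃ (Iso.refl _) (asIso (R.iShriek.map p)) (by simp)
  refine ⟨A, B, q ≫ p, u, δ₃, ⟨hX.isoClosed_le eXA.symm hX₁, hY.isoClosed_le eYA.symm hY₁⟩,
    ⟨?_, ?_⟩, hT₃⟩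
  · exact hX.isoClosed_ge
      ((shiftFunctor X (1 : ℤ)).mapIso eXB.symm ≪≫ ((R.jStar.commShiftIso (1 : ℤ)).app B).symm) hX₂
  · exact hY.isoClosed_ge
      ((shiftFunctor Y (1 : ℤ)).mapIso eYB ≪≫ ((R.iShriek.commShiftIso (1 : ℤ)).app B).symm) hY₂

end Glueing.Recollement

open Glueing CategoryTheory Limits Pretriangulated in
/-- Glueing of t-structures along a recollement (Beilinson–Bernstein–Deligne): given
t-structures on `X` and on `Y`, the pair `D^{≤0} = {Z : j^*Z ∈ X^{≤0}, i^*Z ∈ Y^{≤0}}`,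
`D^{≥0} = {Z : j^*Z ∈ X^{≥0}, i^!Z ∈ Y^{≥0}}` is a t-structure on `D`. -/
theorem glued_tStructure
    {D Y X : Type*} [Category D] [HasZeroObject D] [Preadditive D] [HasShift D ℤ]
    [∀ n : ℤ, (shiftFunctor D n).Additive] [Pretriangulated D]
    [Category Y] [HasZeroObject Y] [Preadditive Y] [HasShift Y ℤ]
    [∀ n : ℤ, (shiftFunctor Y n).Additive] [Pretriangulated Y]
    [Category X] [HasZeroObject X] [Preadditive X] [HasShift X ℤ]
    [∀ n : ℤ, (shiftFunctor X n).Additive] [Pretriangulated X]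
    (R : Recollement D Y X)
    {XLe XGe : X → Prop} {YLe YGe : Y → Prop}
    (hX : IsTStructure X XLe XGe) (hY : IsTStructure Y YLe YGe) :
    IsTStructure D
      (fun Z => XLe (R.jStar.obj Z) ∧ YLe (R.iStar.obj Z))
      (fun Z => XGe (R.jStar.obj Z) ∧ YGe (R.iShriek.obj Z)) where
  isoClosed_le e h :=
    ⟨hX.isoClosed_le (R.jStar.mapIso e) h.1, hY.isoClosed_le (R.iStar.mapIso e) h.2⟩
  isoClosed_ge e h :=
    ⟨hX.isoClosed_ge (R.jStar.mapIso e) h.1, hY.isoClosed_ge (R.iShriek.mapIso e) h.2⟩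
  summands_le i r hir h :=
    ⟨hX.summands_le _ _ ((Retract.mk i r hir).map R.jStar).retract h.1,
      hY.summands_le _ _ ((Retract.mk i r hir).map R.iStar).retract h.2⟩
  summands_ge i r hir h :=
    ⟨hX.summands_ge _ _ ((Retract.mk i r hir).map R.jStar).retract h.1,
      hY.summands_ge _ _ ((Retract.mk i r hir).map R.iShriek).retract h.2⟩
  shift_le A h :=
    ⟨hX.isoClosed_le ((R.jStar.commShiftIso (1 : ℤ)).app A).symm (hX.shift_le _ h.1),
      hY.isoClosed_le ((R.iStar.commShiftIso (1 : ℤ)).app A).symm (hY.shift_le _ h.2)⟩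
  shift_ge A h :=
    ⟨hX.isoClosed_ge ((R.jStar.commShiftIso (-1 : ℤ)).app A).symm (hX.shift_ge _ h.1),
      hY.isoClosed_ge ((R.iShriek.commShiftIso (-1 : ℤ)).app A).symm (hY.shift_ge _ h.2)⟩
  orthogonal := Recollement.glued_orthogonal hX hY
  exists_triangle := Recollement.glued_exists_triangle hX hY
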